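/- arXiv:1306.6930 — 4 statements merged into one kernel-verified Lean document; each statement's English description precedes it below -/
import Mathlib

section
/- If Ω ⊂ ℝ² is a bounded open connected domain and f : Ω → ℝ is continuous and Mostow monotone, then f is Lebesgue monotone, i.e., on every compact subset K of Ω, f attains its maximum and minimum over K on the topological boundary of K. -/
/-!
Let `x₀` maximise `f` over the compact set `K`. If `x₀` is an interior point, the connected
component `U` of `x₀` in the interior of `K` is open, connected and not closed (the plane is
connected and not compact), and its frontier lies in the frontier of `K`. Mostow monotonicity on
`U` then produces a point of `∂U ⊆ ∂K` where `f` is at least `f x₀`. Minima follow by duality.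
-/

open Metric Set

section

variable {X : Type*} [TopologicalSpace X]

theorem closure_connectedComponentIn_inter_subset {V : Set X} (x : X) :
    closure (connectedComponentIn V x) ∩ V ⊆ connectedComponentIn V x := by
  rintro y ⟨hyC, hyV⟩
  have hx : x ∈ V := connectedComponentIn_nonempty_iff.mp (closure_nonempty_iff.mp ⟨y, hyC⟩)
  have hpre : IsPreconnected (insert y (connectedComponentIn V x)) :=
    isPreconnected_connectedComponentIn.subset_closure (subset_insert _ _)
      (insert_subset hyC subset_closure)
  exact hpre.subset_connectedComponentIn (mem_insert_of_mem _ (mem_connectedComponentIn hx))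
    (insert_subset hyV (connectedComponentIn_subset _ _)) (mem_insert _ _)

theorem frontier_connectedComponentIn_subset [LocallyConnectedSpace X] {V : Set X}
    (hV : IsOpen V) (x : X) : frontier (connectedComponentIn V x) ⊆ frontier V := by
  rw [hV.connectedComponentIn.frontier_eq, hV.frontier_eq]
  exact fun y ⟨hyC, hyC'⟩ => ⟨closure_mono (connectedComponentIn_subset _ _) hyC,
    fun hyV => hyC' (closure_connectedComponentIn_inter_subset x ⟨hyC, hyV⟩)⟩

variable [LocallyConnectedSpace X] [PreconnectedSpace X] [NoncompactSpace X] [T2Space X]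
  {α : Type*} [ConditionallyCompleteLinearOrder α] [TopologicalSpace α]

theorem IsCompact.exists_mem_frontier_isMaxOn [ClosedIciTopology α] {K : Set X}
    (hK : IsCompact K) (hne : K.Nonempty) {f : X → α} (hf : ContinuousOn f K)
    (hmono : ∀ U ⊆ K, IsOpen U → IsConnected U → U ≠ closure U →
      sSup (f '' U) ≤ sSup (f '' frontier U)) :
    ∃ x ∈ frontier K, IsMaxOn f K x := by
  obtain ⟨x₀, hx₀K, hx₀max⟩ := hK.exists_isMaxOn hne hf
  by_cases hx₀fr : x₀ ∈ frontier K
  · exact ⟨x₀, hx₀fr, hx₀max⟩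
  have hx₀ : x₀ ∈ interior K := self_sdiff_frontier K ▸ ⟨hx₀K, hx₀fr⟩
  set U := connectedComponentIn (interior K) x₀
  have hUo : IsOpen U := isOpen_interior.connectedComponentIn
  have hx₀U : x₀ ∈ U := mem_connectedComponentIn hx₀
  have hUK : U ⊆ K := (connectedComponentIn_subset _ _).trans interior_subset
  have hfrU : frontier U ⊆ frontier K :=
    (frontier_connectedComponentIn_subset isOpen_interior x₀).trans frontier_interior_subset
  have hfrK : frontier U ⊆ K := hfrU.trans hK.isClosed.frontier_subset
  have hfrne : (frontier U).Nonempty := nonempty_frontier_iff.2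
    ⟨⟨x₀, hx₀U⟩, fun h => noncompact_univ X (hK.of_isClosed_subset isClosed_univ (h ▸ hUK))⟩
  have hUcl : U ≠ closure U := fun h => by
    rw [hUo.frontier_eq, ← h, sdiff_self] at hfrne
    exact not_nonempty_empty hfrne
  obtain ⟨y, hyU, hy⟩ :=
    (hK.of_isClosed_subset isClosed_frontier hfrK).exists_sSup_image_eq hfrne (hf.mono hfrK)
  refine ⟨y, hfrU hyU, fun z hz => ?_⟩
  calc f z ≤ f x₀ := hx₀max hz
    _ ≤ sSup (f '' U) :=
      le_csSup ⟨f x₀, forall_mem_image.2 fun z hz => hx₀max (hUK hz)⟩ (mem_image_of_mem f hx₀U)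
    _ ≤ sSup (f '' frontier U) :=
      hmono U hUK hUo (isConnected_connectedComponentIn_iff.2 hx₀) hUcl
    _ = f y := hy

theorem IsCompact.exists_mem_frontier_isMinOn [ClosedIicTopology α] {K : Set X}
    (hK : IsCompact K) (hne : K.Nonempty) {f : X → α} (hf : ContinuousOn f K)
    (hmono : ∀ U ⊆ K, IsOpen U → IsConnected U → U ≠ closure U →
      sInf (f '' frontier U) ≤ sInf (f '' U)) :
    ∃ x ∈ frontier K, IsMinOn f K x :=
  hK.exists_mem_frontier_isMaxOn (α := αᵒᵈ) hne hf hmono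

end

theorem mostow_implies_lebesgue_general
    (Ω : Set (EuclideanSpace ℝ (Fin 2)))
    (f : EuclideanSpace ℝ (Fin 2) → ℝ) (hf : ContinuousOn f Ω)
    (hmono : ∀ U : Set (EuclideanSpace ℝ (Fin 2)), U ⊆ Ω → IsOpen U → IsConnected U →
      U ≠ closure U →
      sSup (f '' U) ≤ sSup (f '' frontier U) ∧ sInf (f '' frontier U) ≤ sInf (f '' U)) :
    ∀ K : Set (EuclideanSpace ℝ (Fin 2)), K ⊆ Ω → IsCompact K → K.Nonempty →
      (∃ x ∈ frontier K, ∀ y ∈ K, f y ≤ f x) ∧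
      (∃ x ∈ frontier K, ∀ y ∈ K, f x ≤ f y) := by
  intro K hKΩ hK hne
  obtain ⟨xmax, hxmax, hmax⟩ := hK.exists_mem_frontier_isMaxOn hne (hf.mono hKΩ)
    fun U hU hUo hUc hUcl => (hmono U (hU.trans hKΩ) hUo hUc hUcl).1
  obtain ⟨xmin, hxmin, hmin⟩ := hK.exists_mem_frontier_isMinOn hne (hf.mono hKΩ)
    fun U hU hUo hUc hUcl => (hmono U (hU.trans hKΩ) hUo hUc hUcl).2
  exact ⟨⟨xmax, hxmax, fun y hy => hmax hy⟩, ⟨xmin, hxmin, fun y hy => hmin hy⟩⟩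

theorem mostow_implies_lebesgue
    (Ω : Set (EuclideanSpace ℝ (Fin 2))) (hΩo : IsOpen Ω) (hΩb : Bornology.IsBounded Ω)
    (hΩc : IsConnected Ω)
    (f : EuclideanSpace ℝ (Fin 2) → ℝ) (hf : ContinuousOn f Ω)
    (hmono : ∀ U : Set (EuclideanSpace ℝ (Fin 2)), U ⊆ Ω → IsOpen U → IsConnected U →
      U ≠ closure U →
      sSup (f '' U) ≤ sSup (f '' frontier U) ∧ sInf (f '' frontier U) ≤ sInf (f '' U)) :
    ∀ K : Set (EuclideanSpace ℝ (Fin 2)), K ⊆ Ω → IsCompact K → K.Nonempty →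
      (∃ x ∈ frontier K, ∀ y ∈ K, f y ≤ f x) ∧
      (∃ x ∈ frontier K, ∀ y ∈ K, f x ≤ f y) :=
  mostow_implies_lebesgue_general Ω f hf hmono
end

section
/- Let Ω ⊂ ℝ² be a bounded open domain and f : Ω → ℝ continuous and Lebesgue monotone. Then f is Vodopyanov–Goldstein monotone: for every x ∈ Ω and every r with 0 < r < dist(x, ∂Ω), the set B(x,r) ∩ f⁻¹( f(B(x,r)) ∩ (ℝ \ f(S(x,r))) ) has Lebesgue measure zero, where B(x,r) is the closed ball and S(x,r) its boundary sphere. -/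
/-! By the Lebesgue property, `f` attains its maximum and minimum over `B(x,r)` at two points
of the sphere `S(x,r)`. The sphere is connected in the plane, so by the intermediate value
theorem `f(S(x,r))` contains the whole interval between them, hence all of `f(B(x,r))`.
The set in question is therefore empty. -/

open Metric Set MeasureTheory

theorem image_subset_image_of_isPreconnected {X α : Type*} [TopologicalSpace X] [LinearOrder α]
    [TopologicalSpace α] [OrderClosedTopology α] {f : X → α} {K S : Set X}
    (hS : IsPreconnected S) (hf : ContinuousOn f S)
    (hmax : ∃ a ∈ S, ∀ y ∈ K, f y ≤ f a) (hmin : ∃ b ∈ S, ∀ y ∈ K, f b ≤ f y) :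
    f '' K ⊆ f '' S := by
  obtain ⟨a, ha, hamax⟩ := hmax
  obtain ⟨b, hb, hbmin⟩ := hmin
  rintro _ ⟨y, hy, rfl⟩
  exact hS.intermediate_value hb ha hf ⟨hbmin y hy, hamax y hy⟩

theorem closedBall_subset_of_lt_infDist_compl {E : Type*} [PseudoMetricSpace E] {Ω : Set E}
    {x : E} {r : ℝ} (h : r < infDist x Ωᶜ) : closedBall x r ⊆ Ω :=
  disjoint_compl_right_iff_subset.mp (disjoint_closedBall_of_lt_infDist h)

theorem isPreconnected_sphere_euclideanSpace_fin_two (x : EuclideanSpace ℝ (Fin 2)) (r : ℝ) :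
    IsPreconnected (sphere x r) := by
  refine isPreconnected_sphere ?_ x r
  rw [← Module.finrank_eq_rank, finrank_euclideanSpace_fin]
  norm_num

theorem lebesgue_implies_vodopyanov_goldstein_general
    (Ω : Set (EuclideanSpace ℝ (Fin 2)))
    (f : EuclideanSpace ℝ (Fin 2) → ℝ) (hf : ContinuousOn f Ω)
    (hLeb : ∀ K : Set (EuclideanSpace ℝ (Fin 2)), K ⊆ Ω → IsCompact K → K.Nonempty →
      (∃ x ∈ frontier K, ∀ y ∈ K, f y ≤ f x) ∧
      (∃ x ∈ frontier K, ∀ y ∈ K, f x ≤ f y)) :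
    ∀ x ∈ Ω, ∀ r : ℝ, 0 < r → r < Metric.infDist x Ωᶜ →
      volume (closedBall x r ∩
        f ⁻¹' (f '' closedBall x r ∩ (univ \ f '' sphere x r))) = 0 := by
  intro x _ r hr hrΩ
  have hball : closedBall x r ⊆ Ω := closedBall_subset_of_lt_infDist_compl hrΩ
  have hsphere : sphere x r ⊆ Ω := sphere_subset_closedBall.trans hball
  obtain ⟨hmax, hmin⟩ :=
    hLeb (closedBall x r) hball (isCompact_closedBall x r) ⟨x, mem_closedBall_self hr.le⟩
  rw [frontier_closedBall x hr.ne'] at hmax hmin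
  have himage : f '' closedBall x r ⊆ f '' sphere x r :=
    image_subset_image_of_isPreconnected (isPreconnected_sphere_euclideanSpace_fin_two x r)
      (hf.mono hsphere) hmax hmin
  suffices closedBall x r ∩ f ⁻¹' (f '' closedBall x r ∩ (univ \ f '' sphere x r)) = ∅ by
    rw [this, measure_empty]
  rw [eq_empty_iff_forall_notMem]
  rintro y ⟨-, hyK, -, hyS⟩
  exact hyS (himage hyK)

theorem lebesgue_implies_vodopyanov_goldstein
    (Ω : Set (EuclideanSpace ℝ (Fin 2))) (hΩo : IsOpen Ω) (hΩb : Bornology.IsBounded Ω)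
    (f : EuclideanSpace ℝ (Fin 2) → ℝ) (hf : ContinuousOn f Ω)
    (hLeb : ∀ K : Set (EuclideanSpace ℝ (Fin 2)), K ⊆ Ω → IsCompact K → K.Nonempty →
      (∃ x ∈ frontier K, ∀ y ∈ K, f y ≤ f x) ∧
      (∃ x ∈ frontier K, ∀ y ∈ K, f x ≤ f y)) :
    ∀ x ∈ Ω, ∀ r : ℝ, 0 < r → r < Metric.infDist x Ωᶜ →
      volume (closedBall x r ∩
        f ⁻¹' (f '' closedBall x r ∩ (univ \ f '' sphere x r))) = 0 :=
  lebesgue_implies_vodopyanov_goldstein_general Ω f hf hLeb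
end

section
/- The function f(x,y) = x³ − x on ℝ² is Lebesgue monotone on any bounded open domain Ω ⊂ ℝ²: for every compact subset Ω' ⊆ Ω, f attains its maximum and minimum over Ω' at points of ∂Ω'. -/
/-! A function of `x` alone is constant along vertical lines, and every vertical line through a
point of a compact set `K` leaves `K`, so it meets `frontier K`. Hence the value at an interior
extremum is also attained on the frontier. -/

open Set

section LineInvariant

variable {E : Type*} [NormedAddCommGroup E] [NormedSpace ℝ E] {K : Set E} {v : E}

theorem IsCompact.exists_add_smul_mem_frontier (hK : IsCompact K) {p : E} (hp : p ∈ K)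
    (hv : v ≠ 0) : ∃ t : ℝ, p + t • v ∈ frontier K := by
  set line : ℝ → E := fun t => p + t • v
  have hline : Topology.IsClosedEmbedding line :=
    (Homeomorph.addLeft p).isClosedEmbedding.comp (isClosedEmbedding_smul_left hv)
  have hne : (line ⁻¹' K).Nonempty := ⟨0, by simpa [line] using hp⟩
  have hne_univ : line ⁻¹' K ≠ univ := fun h =>
    noncompact_univ ℝ (h ▸ hline.isCompact_preimage hK)
  obtain ⟨t, ht⟩ := nonempty_frontier_iff.2 ⟨hne, hne_univ⟩
  exact ⟨t, hline.continuous.frontier_preimage_subset K ht⟩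

variable {f : E → ℝ}

theorem IsCompact.exists_mem_frontier_apply_eq (hK : IsCompact K) (hv : v ≠ 0)
    (hf : ∀ x (t : ℝ), f (x + t • v) = f x) {p : E} (hp : p ∈ K) :
    ∃ q ∈ frontier K, f q = f p := by
  obtain ⟨t, ht⟩ := hK.exists_add_smul_mem_frontier hp hv
  exact ⟨p + t • v, ht, hf p t⟩

theorem IsCompact.exists_isMaxOn_mem_frontier (hK : IsCompact K) (hne : K.Nonempty)
    (hcont : ContinuousOn f K) (hv : v ≠ 0) (hf : ∀ x (t : ℝ), f (x + t • v) = f x) :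
    ∃ q ∈ frontier K, IsMaxOn f K q := by
  obtain ⟨p, hp, hmax⟩ := hK.exists_isMaxOn hne hcont
  obtain ⟨q, hq, hfq⟩ := hK.exists_mem_frontier_apply_eq hv hf hp
  exact ⟨q, hq, isMaxOn_iff.2 fun y hy => hfq ▸ isMaxOn_iff.1 hmax y hy⟩

theorem IsCompact.exists_isMinOn_mem_frontier (hK : IsCompact K) (hne : K.Nonempty)
    (hcont : ContinuousOn f K) (hv : v ≠ 0) (hf : ∀ x (t : ℝ), f (x + t • v) = f x) :
    ∃ q ∈ frontier K, IsMinOn f K q := by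
  obtain ⟨p, hp, hmin⟩ := hK.exists_isMinOn hne hcont
  obtain ⟨q, hq, hfq⟩ := hK.exists_mem_frontier_apply_eq hv hf hp
  exact ⟨q, hq, isMinOn_iff.2 fun y hy => hfq ▸ isMinOn_iff.1 hmin y hy⟩

end LineInvariant

theorem cubic_is_lebesgue_monotone_general
    (Ω : Set (EuclideanSpace ℝ (Fin 2)))
    (f : EuclideanSpace ℝ (Fin 2) → ℝ) (hf : ∀ p, f p = (p 0) ^ 3 - p 0) :
    ∀ Ω' : Set (EuclideanSpace ℝ (Fin 2)), Ω' ⊆ Ω → IsCompact Ω' → Ω'.Nonempty →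
      (∃ x ∈ frontier Ω', ∀ y ∈ Ω', f y ≤ f x) ∧
      (∃ x ∈ frontier Ω', ∀ y ∈ Ω', f x ≤ f y) := by
  intro Ω' _ hK hne
  set v : EuclideanSpace ℝ (Fin 2) := EuclideanSpace.single 1 1
  have hv : v ≠ 0 := by simp [v]
  have hvert : ∀ x (t : ℝ), f (x + t • v) = f x := fun x t => by simp [hf, v]
  have hcont : ContinuousOn f Ω' := by
    rw [funext hf]
    fun_prop
  exact ⟨hK.exists_isMaxOn_mem_frontier hne hcont hv hvert,
    hK.exists_isMinOn_mem_frontier hne hcont hv hvert⟩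

theorem cubic_is_lebesgue_monotone
    (Ω : Set (EuclideanSpace ℝ (Fin 2))) (hΩo : IsOpen Ω) (hΩb : Bornology.IsBounded Ω)
    (f : EuclideanSpace ℝ (Fin 2) → ℝ) (hf : ∀ p, f p = (p 0) ^ 3 - p 0) :
    ∀ Ω' : Set (EuclideanSpace ℝ (Fin 2)), Ω' ⊆ Ω → IsCompact Ω' → Ω'.Nonempty →
      (∃ x ∈ frontier Ω', ∀ y ∈ Ω', f y ≤ f x) ∧
      (∃ x ∈ frontier Ω', ∀ y ∈ Ω', f x ≤ f y) :=
  cubic_is_lebesgue_monotone_general Ω f hf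
end

section
/- Let Ω ⊂ ℝ² be a bounded open domain and f : Ω → ℝ continuous and normal monotone. Then f is Lebesgue monotone: on every compact subset Ω' ⊆ Ω, f attains its maximum and minimum over Ω' on ∂Ω'. -/
open Set Filter Topology RealInnerProductSpace

/-- `v` is a tangent vector to the set `X` at the point `x`. -/
def IsTangentVec (X : Set (EuclideanSpace ℝ (Fin 2))) (x v : EuclideanSpace ℝ (Fin 2)) :
    Prop :=
  ∃ (xk : ℕ → EuclideanSpace ℝ (Fin 2)) (tk : ℕ → ℝ),
    (∀ k, xk k ∈ X) ∧ Tendsto xk atTop (𝓝 x) ∧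
    (∀ k, 0 < tk k) ∧ Tendsto tk atTop (𝓝 0) ∧
    Tendsto (fun k => (tk k)⁻¹ • (xk k - x)) atTop (𝓝 v)

/-- `nv` is a normal vector to the set `X` at `x`. -/
def IsNormalVec (X : Set (EuclideanSpace ℝ (Fin 2))) (x nv : EuclideanSpace ℝ (Fin 2)) :
    Prop :=
  ∀ v, IsTangentVec X x v → ⟪nv, v⟫ ≤ 0

/-!
Suppose the maximum `M` of `f` over the compact set `Ω'` is attained only in its interior, so
that `K = Ω' ∩ f⁻¹{M}` is a compact subset of `interior Ω'`. Pick a frontier point `z` of `Ω'`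
(so `f z < M`) and a point `x ∈ K` closest to `z`. Near `x` the level set `{f = M}` coincides
with `K`, so `z - x` is a proximal normal to it at `x`, and `x` lies on its frontier. On the line
`γ ↦ x + γ (z - x)`, `f` equals `M` at `γ = 0` and is smaller both at `γ = 1` (the point `z`)
and at some `γ ≤ 0` where the backward ray leaves `Ω'`: `f` is not monotone there.
-/

theorem IsPreconnected.inter_frontier_nonempty {α : Type*} [TopologicalSpace α] {s t : Set α}
    (hs : IsPreconnected s) (hst : (s ∩ t).Nonempty) (hs_not : (s \ t).Nonempty) :
    (s ∩ frontier t).Nonempty := by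
  by_contra h
  have hfr : closure t ∩ s ⊆ interior t := fun y ⟨hyc, hys⟩ =>
    by_contra fun hyi => h ⟨y, hys, hyc, hyi⟩
  obtain ⟨x, hxs, hxt⟩ := hst
  obtain ⟨y, hys, hyt⟩ := hs_not
  have hx : x ∈ interior t := hfr ⟨subset_closure hxt, hxs⟩
  exact hyt (interior_subset (hs.subset_of_closure_inter_subset isOpen_interior ⟨x, hxs, hx⟩
    ((inter_subset_inter_left _ (closure_mono interior_subset)).trans hfr) hys))

section NormedSpace

variable {E : Type*} [NormedAddCommGroup E] [NormedSpace ℝ E]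

theorem Bornology.IsBounded.exists_add_smul_mem_frontier {X : Set E} (hX : IsBounded X)
    {x w : E} (hx : x ∈ X) (hw : w ≠ 0) : ∃ t : ℝ, 0 ≤ t ∧ x + t • w ∈ frontier X := by
  obtain ⟨R, hR⟩ := hX.subset_closedBall x
  have hw' : 0 < ‖w‖ := norm_pos_iff.mpr hw
  have hray : IsPreconnected ((fun t : ℝ => x + t • w) '' Ici 0) :=
    isPreconnected_Ici.image _ (by fun_prop)
  have hfar : x + ((|R| + 1) / ‖w‖) • w ∉ X := fun hmem => by
    have := hR hmem
    rw [Metric.mem_closedBall, dist_eq_norm, add_sub_cancel_left, norm_smul, Real.norm_eq_abs,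
      abs_of_pos (by positivity), div_mul_cancel₀ _ hw'.ne'] at this
    linarith [le_abs_self R]
  obtain ⟨-, ⟨t, ht, rfl⟩, hfr⟩ := hray.inter_frontier_nonempty
    ⟨x, ⟨0, mem_Ici.mpr le_rfl, by simp⟩, hx⟩
    ⟨_, ⟨(|R| + 1) / ‖w‖, mem_Ici.mpr (by positivity), rfl⟩, hfar⟩
  exact ⟨t, ht, hfr⟩

theorem mem_frontier_of_isLocalMinOn_dist {X : Set E} {x z : E} (hx : x ∈ X) (hxz : x ≠ z)
    (hmin : IsLocalMinOn (dist · z) X x) : x ∈ frontier X := by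
  refine ⟨subset_closure hx, fun hint => ?_⟩
  have hx0 : IsLocalMin (dist · z) (x + (0 : ℝ) • (z - x)) := by
    simpa using hmin.isLocalMin (mem_interior_iff_mem_nhds.mp hint)
  have hline : IsLocalMin (fun t : ℝ => dist (x + t • (z - x)) z) 0 :=
    hx0.comp_continuous (g := fun t : ℝ => x + t • (z - x)) (by fun_prop)
  obtain ⟨t, hle, ht0, ht1⟩ :=
    ((hline.filter_mono nhdsWithin_le_nhds).and (Ioo_mem_nhdsGT one_pos)).exists
  have hdist : dist (x + t • (z - x)) z = (1 - t) * dist x z := by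
    rw [dist_eq_norm, dist_eq_norm, show x + t • (z - x) - z = (1 - t) • (x - z) by module,
      norm_smul, Real.norm_eq_abs, abs_of_pos (by linarith)]
  have hpos : 0 < dist x z := dist_pos.mpr hxz
  simp only [zero_smul, add_zero, hdist] at hle
  nlinarith

end NormedSpace

theorem two_inner_add_mul_norm_sq_nonneg {F : Type*} [NormedAddCommGroup F]
    [InnerProductSpace ℝ F] {a w : F} {t : ℝ} (ht : 0 < t) (h : ‖a‖ ≤ ‖a + t • w‖) :
    0 ≤ 2 * ⟪a, w⟫ + t * ‖w‖ ^ 2 := by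
  have hsq := pow_le_pow_left₀ (norm_nonneg a) h 2
  rw [norm_add_sq_real, real_inner_smul_right, norm_smul, Real.norm_eq_abs, abs_of_pos ht] at hsq
  nlinarith

local notation "ℝ²" => EuclideanSpace ℝ (Fin 2)

theorem isNormalVec_sub_of_isLocalMinOn_dist {X : Set ℝ²} {x z : ℝ²}
    (hmin : IsLocalMinOn (dist · z) X x) : IsNormalVec X x (z - x) := by
  rintro v ⟨xk, tk, hmem, hxk, htk, htk0, hlim⟩
  have hclose : ∀ᶠ k in atTop, dist x z ≤ dist (xk k) z :=
    (tendsto_nhdsWithin_iff.mpr ⟨hxk, .of_forall hmem⟩).eventually hmin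
  have hineq : ∀ᶠ k in atTop,
      0 ≤ 2 * ⟪x - z, (tk k)⁻¹ • (xk k - x)⟫ + tk k * ‖(tk k)⁻¹ • (xk k - x)‖ ^ 2 := by
    filter_upwards [hclose] with k hk
    refine two_inner_add_mul_norm_sq_nonneg (htk k) ?_
    rwa [smul_smul, mul_inv_cancel₀ (htk k).ne', one_smul, sub_add_sub_cancel', ← dist_eq_norm,
      ← dist_eq_norm]
  have hlim' : Tendsto (fun k => 2 * ⟪x - z, (tk k)⁻¹ • (xk k - x)⟫ +
      tk k * ‖(tk k)⁻¹ • (xk k - x)‖ ^ 2) atTop (𝓝 (2 * ⟪x - z, v⟫ + 0 * ‖v‖ ^ 2)) :=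
    (tendsto_const_nhds.mul (tendsto_const_nhds.inner hlim)).add (htk0.mul (hlim.norm.pow 2))
  have := ge_of_tendsto hlim' hineq
  rw [← neg_sub, inner_neg_left]
  linarith

def IsNormalMonotoneOn (f : ℝ² → ℝ) (Ω : Set ℝ²) : Prop :=
  ∀ c : ℝ, ∀ x ∈ Ω ∩ frontier {y ∈ Ω | f y = c}, f x = c →
    ∀ nv, IsNormalVec {y ∈ Ω | f y = c} x nv →
      MonotoneOn (fun γ : ℝ => f (x + γ • nv)) {γ : ℝ | x + γ • nv ∈ Ω} ∨
      AntitoneOn (fun γ : ℝ => f (x + γ • nv)) {γ : ℝ | x + γ • nv ∈ Ω}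

theorem IsNormalMonotoneOn.neg {f : ℝ² → ℝ} {Ω : Set ℝ²} (hf : IsNormalMonotoneOn f Ω) :
    IsNormalMonotoneOn (fun y => -f y) Ω := by
  intro c x hx hfx nv hnv
  have hlevel : {y ∈ Ω | -f y = c} = {y ∈ Ω | f y = -c} := by
    simp only [neg_eq_iff_eq_neg]
  rw [hlevel] at hx hnv
  exact (hf (-c) x hx (neg_eq_iff_eq_neg.mp hfx) nv hnv).symm.imp AntitoneOn.neg MonotoneOn.neg

theorem IsNormalMonotoneOn.exists_mem_frontier_isMaxOn {f : ℝ² → ℝ} {Ω Ω' : Set ℝ²}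
    (hNM : IsNormalMonotoneOn f Ω) (hf : ContinuousOn f Ω) (hsub : Ω' ⊆ Ω)
    (hcpt : IsCompact Ω') (hne : Ω'.Nonempty) : ∃ x ∈ frontier Ω', IsMaxOn f Ω' x := by
  by_contra! hcon
  obtain ⟨x₀, hx₀, hmax⟩ := hcpt.exists_isMaxOn hne (hf.mono hsub)
  have hfr_lt : ∀ y ∈ frontier Ω', f y < f x₀ := fun y hy => by
    obtain ⟨w, hw, hlt⟩ := not_forall₂.mp (hcon y hy)
    exact (not_le.mp hlt).trans_le (hmax hw)
  set K := {y ∈ Ω' | f y = f x₀}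
  have hKcpt : IsCompact K := hcpt.of_isClosed_subset
    ((hf.mono hsub).preimage_isClosed_of_isClosed hcpt.isClosed isClosed_singleton) fun y hy => hy.1
  have hKint : K ⊆ interior Ω' := fun y hy => by
    by_contra hyi
    exact (hfr_lt y (hcpt.isClosed.frontier_eq ▸ ⟨hy.1, hyi⟩)).ne hy.2
  obtain ⟨z, hz⟩ := nonempty_frontier_iff.mpr ⟨hne, hcpt.ne_univ⟩
  have hzΩ' : z ∈ Ω' := hcpt.isClosed.frontier_subset hz
  obtain ⟨x, hxK, hxmin⟩ := hKcpt.exists_isMinOn ⟨x₀, hx₀, rfl⟩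
    (continuous_id.dist continuous_const).continuousOn
  have hlocal : IsLocalMinOn (dist · z) {y ∈ Ω | f y = f x₀} x :=
    mem_of_superset (inter_mem_nhdsWithin _ (isOpen_interior.mem_nhds (hKint hxK)))
      fun y hy => hxmin ⟨interior_subset hy.2, hy.1.2⟩
  have hxz : x ≠ z := fun h => (hfr_lt z hz).ne (h ▸ hxK.2)
  have hxΩ := hsub hxK.1
  have hline := hNM (f x₀) x ⟨hxΩ, mem_frontier_of_isLocalMinOn_dist ⟨hxΩ, hxK.2⟩ hxz hlocal⟩
    hxK.2 (z - x) (isNormalVec_sub_of_isLocalMinOn_dist hlocal)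
  obtain ⟨t, ht, hp⟩ :=
    hcpt.isBounded.exists_add_smul_mem_frontier hxK.1 (sub_ne_zero.mpr hxz)
  rcases hline with hmono | hanti
  · have := hmono (a := 0) (b := 1) (by simpa using hxΩ) (by simpa using hsub hzΩ') zero_le_one
    simp only [zero_smul, add_zero, one_smul, add_sub_cancel, hxK.2] at this
    exact (hfr_lt z hz).not_ge this
  · have hp' : x + (-t) • (z - x) = x + t • (x - z) := by module
    have hpΩ : x + (-t) • (z - x) ∈ Ω := hp' ▸ hsub (hcpt.isClosed.frontier_subset hp)
    have := hanti (a := -t) (b := 0) hpΩ (by simpa using hxΩ) (by linarith)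
    simp only [zero_smul, add_zero, hp', hxK.2] at this
    exact (hfr_lt _ hp).not_ge this

theorem normal_monotone_implies_lebesgue_general
    (Ω : Set (EuclideanSpace ℝ (Fin 2)))
    (f : EuclideanSpace ℝ (Fin 2) → ℝ) (hf : ContinuousOn f Ω)
    (hNM : ∀ c : ℝ, ∀ x ∈ Ω ∩ frontier {y ∈ Ω | f y = c}, f x = c →
      ∀ nv, IsNormalVec {y ∈ Ω | f y = c} x nv →
        MonotoneOn (fun γ : ℝ => f (x + γ • nv)) {γ : ℝ | x + γ • nv ∈ Ω} ∨
        AntitoneOn (fun γ : ℝ => f (x + γ • nv)) {γ : ℝ | x + γ • nv ∈ Ω}) :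
    ∀ Ω' : Set (EuclideanSpace ℝ (Fin 2)), Ω' ⊆ Ω → IsCompact Ω' → Ω'.Nonempty →
      (∃ x ∈ frontier Ω', ∀ y ∈ Ω', f y ≤ f x) ∧
      (∃ x ∈ frontier Ω', ∀ y ∈ Ω', f x ≤ f y) := by
  intro Ω' hsub hcpt hne
  obtain ⟨xmax, hxmax, hmax⟩ :=
    IsNormalMonotoneOn.exists_mem_frontier_isMaxOn hNM hf hsub hcpt hne
  obtain ⟨xmin, hxmin, hmin⟩ :=
    IsNormalMonotoneOn.exists_mem_frontier_isMaxOn (IsNormalMonotoneOn.neg hNM) hf.neg hsub hcpt hne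
  exact ⟨⟨xmax, hxmax, isMaxOn_iff.mp hmax⟩,
    ⟨xmin, hxmin, fun y hy => neg_le_neg_iff.mp (isMaxOn_iff.mp hmin y hy)⟩⟩

theorem normal_monotone_implies_lebesgue
    (Ω : Set (EuclideanSpace ℝ (Fin 2))) (hΩo : IsOpen Ω) (hΩb : Bornology.IsBounded Ω)
    (f : EuclideanSpace ℝ (Fin 2) → ℝ) (hf : ContinuousOn f Ω)
    (hNM : ∀ c : ℝ, ∀ x ∈ Ω ∩ frontier {y ∈ Ω | f y = c}, f x = c →
      ∀ nv, IsNormalVec {y ∈ Ω | f y = c} x nv →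
        MonotoneOn (fun γ : ℝ => f (x + γ • nv)) {γ : ℝ | x + γ • nv ∈ Ω} ∨
        AntitoneOn (fun γ : ℝ => f (x + γ • nv)) {γ : ℝ | x + γ • nv ∈ Ω}) :
    ∀ Ω' : Set (EuclideanSpace ℝ (Fin 2)), Ω' ⊆ Ω → IsCompact Ω' → Ω'.Nonempty →
      (∃ x ∈ frontier Ω', ∀ y ∈ Ω', f y ≤ f x) ∧
      (∃ x ∈ frontier Ω', ∀ y ∈ Ω', f x ≤ f y) :=
  normal_monotone_implies_lebesgue_general Ω f hf hNM
end
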